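/- arXiv:2306.06709 — 5 statements merged into one kernel-verified Lean document; each statement's English description precedes it below -/
import Mathlib

section
/- Let μ < 0, 1 < p < N, p < q < p^*, and suppose G, Q, P > 0 satisfy G = μγ_q Q + P and P ≤ S^{−p^*/p} G^{p^*/p} (Sobolev), where S > 0 and γ_q > 0. Then G > S^{N/p}, and consequently E := (1/N)G − μγ_q(1/(qγ_q) − 1/p^*) Q > (1/N) S^{N/p}. -/
/-! Since `μ < 0` the term `μ γ_q Q` is negative, so `G < P`, and Sobolev gives
`S G^{1 - p/N} < S P^{1 - p/N} ≤ G`, i.e. `S < G^{p/N}`, i.e. `S^{N/p} < G`.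
The energy exceeds `G / N` because `q γ_q < p^*` makes the coefficient of `Q` positive. -/

lemma Real.rpow_inv_lt_of_mul_rpow_one_sub_lt {S G t : ℝ} (ht : 0 < t) (hS : 0 ≤ S)
    (hG : 0 < G) (h : S * G ^ (1 - t) < G) : S ^ t⁻¹ < G := by
  have hsplit : G = G ^ (1 - t) * G ^ t := by
    rw [← Real.rpow_add hG, sub_add_cancel, Real.rpow_one]
  have hSG : S < G ^ t := by
    refine lt_of_mul_lt_mul_left (a := G ^ (1 - t)) ?_ (Real.rpow_nonneg hG.le _)
    rwa [← hsplit, mul_comm]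
  calc S ^ t⁻¹ < (G ^ t) ^ t⁻¹ := Real.rpow_lt_rpow hS hSG (inv_pos.mpr ht)
    _ = G := Real.rpow_rpow_inv hG.le ht.ne'

lemma div_mul_div_sub_eq_one_sub_div {N p : ℝ} (hN : N ≠ 0) (hp : p ≠ 0) (hpN : p ≠ N) :
    p / (N * p / (N - p)) = 1 - p / N := by
  have : N - p ≠ 0 := sub_ne_zero.mpr hpN.symm
  field_simp

lemma mul_div_mul_lt_mul_div_sub {N p q : ℝ} (hp : 0 < p) (hpN : p < N) (hq : p < q)
    (hq' : q < N * p / (N - p)) :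
    q * (N * (q - p) / (p * q)) < N * p / (N - p) := by
  have hNp : 0 < N - p := sub_pos.mpr hpN
  have hq'' : q * (N - p) < N * p := (lt_div_iff₀ hNp).mp hq'
  rw [show q * (N * (q - p) / (p * q)) = N * (q - p) / p by field_simp [(hp.trans hq).ne'],
    div_lt_div_iff₀ hp hNp]
  nlinarith

theorem stmt_12_general (N p q μ S G Q P : ℝ)
    (hp : 1 < p) (hpN : p < N) (hq1 : p < q) (hq2 : q < N * p / (N - p))
    (hμ : μ < 0) (hS : 0 < S) (hG : 0 < G) (hQ : 0 < Q)
    (heq : G = μ * (N * (q - p) / (p * q)) * Q + P)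
    (hsob : S * P ^ (p / (N * p / (N - p))) ≤ G) :
    S ^ (N / p) < G ∧
    (1 / N) * S ^ (N / p) <
      (1 / N) * G - μ * (N * (q - p) / (p * q)) *
        (1 / (q * (N * (q - p) / (p * q))) - 1 / (N * p / (N - p))) * Q := by
  have hp0 : 0 < p := one_pos.trans hp
  have hN0 : 0 < N := hp0.trans hpN
  have hγ : 0 < N * (q - p) / (p * q) := by
    have := sub_pos.mpr hq1
    have := hp0.trans hq1
    positivity
  have hμγ : μ * (N * (q - p) / (p * q)) < 0 := mul_neg_of_neg_of_pos hμ hγ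
  have hGP : G < P := by nlinarith
  rw [div_mul_div_sub_eq_one_sub_div hN0.ne' hp0.ne' hpN.ne] at hsob
  have hSG : S * G ^ (1 - p / N) < G :=
    calc S * G ^ (1 - p / N) < S * P ^ (1 - p / N) := by
          gcongr
          exact sub_pos.mpr ((div_lt_one hN0).mpr hpN)
      _ ≤ G := hsob
  have hmain : S ^ (N / p) < G := by
    simpa using Real.rpow_inv_lt_of_mul_rpow_one_sub_lt (by positivity) hS.le hG hSG
  have hcoef : 0 < 1 / (q * (N * (q - p) / (p * q))) - 1 / (N * p / (N - p)) :=
    sub_pos.mpr (one_div_lt_one_div_of_lt (mul_pos (hp0.trans hq1) hγ)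
      (mul_div_mul_lt_mul_div_sub hp0 hpN hq1 hq2))
  refine ⟨hmain, ?_⟩
  have hpos := mul_pos (mul_pos (neg_pos.mpr hμγ) hcoef) hQ
  have := mul_lt_mul_of_pos_left hmain (one_div_pos.mpr hN0)
  linarith

/-- Nonexistence energy bound for `μ < 0`: if `G = μγ_q Q + P` with `G, Q, P > 0`, and the
Sobolev inequality `S P^{p/p*} ≤ G` holds, then `G > S^{N/p}` and consequently
`(1/N)G - μγ_q(1/(qγ_q) - 1/p*)Q > (1/N)S^{N/p}`. -/
theorem stmt_12 (N p q μ S G Q P : ℝ)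
    (hp : 1 < p) (hpN : p < N) (hq1 : p < q) (hq2 : q < N * p / (N - p))
    (hμ : μ < 0) (hS : 0 < S) (hG : 0 < G) (hQ : 0 < Q) (hP : 0 < P)
    (heq : G = μ * (N * (q - p) / (p * q)) * Q + P)
    (hsob : S * P ^ (p / (N * p / (N - p))) ≤ G) :
    S ^ (N / p) < G ∧
    (1 / N) * S ^ (N / p) <
      (1 / N) * G - μ * (N * (q - p) / (p * q)) *
        (1 / (q * (N * (q - p) / (p * q))) - 1 / (N * p / (N - p))) * Q :=
  stmt_12_general N p q μ S G Q P hp hpN hq1 hq2 hμ hS hG hQ heq hsob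
end

section
/- Let q = p + p²/N (so qγ_q = p) and suppose u ∈ W^{1,p}(ℝ^N) with ‖u‖_p = a satisfies ‖∇u‖_p^p = μγ_q‖u‖_q^q + ‖u‖_{p^*}^{p^*} and p‖∇u‖_p^p ≥ μqγ_q²‖u‖_q^q + p^*‖u‖_{p^*}^{p^*}. Then ‖u‖_{p^*}^{p^*} ≤ 0, contradicting u ≠ 0; hence the set 𝒫⁰ ∪ 𝒫⁺ of such u is empty. -/
/-- `𝒫⁰ ∪ 𝒫⁺ = ∅` in the critical case `q = p + p²/N` (so `qγ_q = p`): there is no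
`G, Q, P` with `P > 0` satisfying `G = μγ_q Q + P` and `pG ≥ μqγ_q² Q + p* P`. -/
theorem stmt_13 (N p μ G Q P : ℝ) (hp : 1 < p) (hpN : p < N) (hμ : 0 < μ)
    (hQ : 0 ≤ Q) (hP : 0 < P)
    (heq : G = μ * (N * ((p + p ^ 2 / N) - p) / (p * (p + p ^ 2 / N))) * Q + P)
    (hineq : p * G ≥
      μ * (p + p ^ 2 / N) * (N * ((p + p ^ 2 / N) - p) / (p * (p + p ^ 2 / N))) ^ 2 * Q
        + (N * p / (N - p)) * P) :
    False := by
  have hN : (0:ℝ) < N := by linarith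
  have hp0 : (0:ℝ) < p := by linarith
  have hq : (0:ℝ) < p + p ^ 2 / N := by positivity
  have hγ : N * ((p + p ^ 2 / N) - p) / (p * (p + p ^ 2 / N)) = p / (p + p ^ 2 / N) := by
    field_simp
    ring
  rw [hγ] at heq hineq
  have h2 : μ * (p + p ^ 2 / N) * (p / (p + p ^ 2 / N)) ^ 2 * Q
      = p * (μ * (p / (p + p ^ 2 / N)) * Q) := by
    field_simp
  rw [h2, heq] at hineq
  have key : p * P ≥ N * p / (N - p) * P := by linarith [hineq]; 
  have hNp : (0:ℝ) < N - p := by linarith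
  have hle : N * p / (N - p) ≤ p := le_of_mul_le_mul_right (by linarith [key]) hP
  have h3 : N * p ≤ p * (N - p) := by
    rw [div_le_iff₀ hNp] at hle
    linarith
  nlinarith
end

section
/- Let p + p²/N < q < p^* (so qγ_q > p) and suppose G, Q, P ≥ 0 with Q + P > 0, μ > 0, satisfy G = μγ_q Q + P and p G = μ q γ_q² Q + p^* P. Then μγ_q(qγ_q − p) Q + (p^* − p) P = 0, which forces Q = P = 0, a contradiction. Hence 𝒫⁰ is empty in the supercritical regime. -/
/-! The Nehari identity `G = μγ_q Q + P` and the Pohozaev identity `pG = μqγ_q² Q + p* P` combine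
(`p` times the first minus the second) into `μγ_q (qγ_q − p) Q + (p* − p) P = 0`. In the
supercritical regime both coefficients are positive, which is impossible for `Q > 0`, `P ≥ 0`. -/

theorem false_of_nehari_of_pohozaev {p a b s G Q P : ℝ} (ha : 0 < a) (hb : p < b) (hs : p < s)
    (hQ : 0 < Q) (hP : 0 ≤ P) (hNehari : G = a * Q + P)
    (hPohozaev : p * G = a * b * Q + s * P) : False := by
  have hcomb : a * (b - p) * Q + (s - p) * P = 0 := by
    linear_combination p * hNehari - hPohozaev
  have hpos : 0 < a * (b - p) * Q + (s - p) * P := by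
    have : 0 < a * (b - p) * Q := by have := sub_pos.2 hb; positivity
    have : 0 ≤ (s - p) * P := mul_nonneg (sub_pos.2 hs).le hP
    linarith
  exact hpos.ne' hcomb

theorem lt_of_add_sq_div_lt {N p q : ℝ} (hN : 0 ≤ N) (hq : p + p ^ 2 / N < q) : p < q := by
  have := div_nonneg (sq_nonneg p) hN
  linarith

theorem lt_mul_gamma_of_add_sq_div_lt {N p q : ℝ} (hp : 0 < p) (hN : 0 < N)
    (hq : p + p ^ 2 / N < q) : p < q * (N * (q - p) / (p * q)) := by
  have hq0 : 0 < q := hp.trans (lt_of_add_sq_div_lt hN.le hq)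
  have hsq : p ^ 2 < N * (q - p) := by
    rw [← div_lt_iff₀' hN]
    linarith
  have hqγ : q * (N * (q - p) / (p * q)) = N * (q - p) / p := by
    field_simp
  rw [hqγ, lt_div_iff₀ hp]
  nlinarith

theorem lt_mul_div_sub_self {N p : ℝ} (hp : 0 < p) (hpN : p < N) : p < N * p / (N - p) := by
  rw [lt_div_iff₀ (sub_pos.2 hpN)]
  nlinarith

theorem stmt_14_general (N p q μ G Q P : ℝ) (hp : 1 < p) (hpN : p < N)
    (hq1 : p + p ^ 2 / N < q) (hμ : 0 < μ)
    (hQ : 0 < Q) (hP : 0 < P)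
    (heq : G = μ * (N * (q - p) / (p * q)) * Q + P)
    (heq2 : p * G = μ * q * (N * (q - p) / (p * q)) ^ 2 * Q + (N * p / (N - p)) * P) :
    False := by
  have hp0 : 0 < p := by linarith
  have hN0 : 0 < N := by linarith
  set γ := N * (q - p) / (p * q)
  have hqγ : p < q * γ := lt_mul_gamma_of_add_sq_div_lt hp0 hN0 hq1
  have hγ : 0 < γ :=
    pos_of_mul_pos_right (hp0.trans hqγ) (hp0.trans (lt_of_add_sq_div_lt hN0.le hq1)).le
  exact false_of_nehari_of_pohozaev (a := μ * γ) (b := q * γ) (mul_pos hμ hγ) hqγ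
    (lt_mul_div_sub_self hp0 hpN) hQ hP.le heq (by linear_combination heq2)

/-- `𝒫⁰ = ∅` in the supercritical regime `p + p²/N < q < p*` (so `qγ_q > p`): there is no
`G, Q, P` with `Q, P > 0` satisfying both `G = μγ_q Q + P` and `pG = μqγ_q² Q + p* P`. -/
theorem stmt_14 (N p q μ G Q P : ℝ) (hp : 1 < p) (hpN : p < N)
    (hq1 : p + p ^ 2 / N < q) (hq2 : q < N * p / (N - p)) (hμ : 0 < μ)
    (hQ : 0 < Q) (hP : 0 < P)
    (heq : G = μ * (N * (q - p) / (p * q)) * Q + P)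
    (heq2 : p * G = μ * q * (N * (q - p) / (p * q)) ^ 2 * Q + (N * p / (N - p)) * P) :
    False :=
  stmt_14_general N p q μ G Q P hp hpN hq1 hμ hQ hP heq heq2
end

section
/- Let q = p + p²/N and μ satisfying μ a^{p²/N} < q/(p C^q), where C is the Gagliardo–Nirenberg constant. If u is on the L^p sphere S_a and satisfies ‖∇u‖_p^p = μγ_q‖u‖_q^q + ‖u‖_{p^*}^{p^*} with the GN inequality ‖u‖_q^q ≤ C^q ‖∇u‖_p^{qγ_q} a^{q(1−γ_q)} and Sobolev ‖u‖_{p^*}^{p^*} ≤ S^{−p^*/p}‖∇u‖_p^{p^*}, then ‖∇u‖_p^p ≥ ((1 − (p/q)C^q μ a^{p²/N}) S^{p^*/p})^{p/(p^*−p)} > 0; moreover the energy E = (1/N)‖∇u‖_p^p − (pμ)/(Nq)‖u‖_q^q satisfies E ≥ (1/N)(1 − (p/q)C^q μ a^{p²/N})‖∇u‖_p^p > 0. -/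
/-! In the `L^p`-critical case `q = p + p²/N` one has `γ_q = p/q`, so the Gagliardo–Nirenberg
inequality bounds the subcritical term linearly: `μ γ_q ‖u‖_q^q ≤ θ ‖∇u‖_p^p` with
`θ = (p/q) C^q μ a^{p²/N} < 1`. The Pohozaev identity then leaves
`(1 - θ) ‖∇u‖_p^p ≤ ‖u‖_{p^*}^{p^*}`, and since the Sobolev bound grows like the power
`p^*/p > 1` of `‖∇u‖_p^p`, this forces `‖∇u‖_p^p` away from zero. The same linear
bound gives the energy estimate. -/

lemma rpow_inv_le_of_mul_le_rpow {K S G r : ℝ} (hK : 0 < K) (hS : 0 < S) (hG : 0 < G)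
    (hr : 1 < r) (h : K * G ≤ S ^ (-r) * G ^ r) : (K * S ^ r) ^ (r - 1)⁻¹ ≤ G := by
  have hSr : 0 < S ^ r := by positivity
  have hpow : K * S ^ r ≤ G ^ (r - 1) := by
    rw [Real.rpow_neg hS.le, ← div_eq_inv_mul, le_div_iff₀ hSr] at h
    rw [Real.rpow_sub_one hG.ne', le_div_iff₀ hG]
    linarith
  calc (K * S ^ r) ^ (r - 1)⁻¹ ≤ (G ^ (r - 1)) ^ (r - 1)⁻¹ := by gcongr
    _ = G := Real.rpow_rpow_inv hG.le (by linarith)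

namespace CriticalPohozaev

variable {N p q : ℝ}

lemma gamma_eq_div (hp : 0 < p) (hN : 0 < N) (hq : q = p + p ^ 2 / N) :
    N * (q - p) / (p * q) = p / q := by
  subst hq
  field_simp
  ring

lemma sobolev_ratio_gt_one (hp : 0 < p) (hpN : p < N) : 1 < N * p / (N - p) / p := by
  rw [mul_div_right_comm, mul_div_cancel_right₀ _ hp.ne', one_lt_div (by linarith)]
  linarith

lemma div_sub_self_eq_inv (hp : p ≠ 0) (r : ℝ) : p / (r - p) = (r / p - 1)⁻¹ := by
  rw [div_sub_one hp, inv_div]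

lemma mul_le_of_gagliardoNirenberg {μ C a G Q : ℝ} (hp : 0 < p) (hN : 0 < N)
    (hq : q = p + p ^ 2 / N) (hμ : 0 ≤ μ)
    (hGN : Q ≤ C ^ q * G ^ (q * (p / q) / p) * a ^ (q * (1 - p / q))) :
    μ * (p / q) * Q ≤ p / q * C ^ q * μ * a ^ (p ^ 2 / N) * G := by
  have hq0 : 0 < q := by rw [hq]; positivity
  have hexp₁ : q * (p / q) / p = 1 := by field_simp
  have hexp₂ : q * (1 - p / q) = p ^ 2 / N := by
    rw [mul_one_sub, mul_div_cancel₀ _ hq0.ne', hq]; ring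
  rw [hexp₁, hexp₂, Real.rpow_one] at hGN
  calc μ * (p / q) * Q ≤ μ * (p / q) * (C ^ q * G * a ^ (p ^ 2 / N)) := by gcongr
    _ = p / q * C ^ q * μ * a ^ (p ^ 2 / N) * G := by ring

end CriticalPohozaev

open CriticalPohozaev in
theorem stmt_15_general (N p a μ C S G Q P q γ pstar : ℝ)
    (hp : 1 < p) (hpN : p < N) (hμ : 0 < μ) (hC : 0 < C) (hS : 0 < S)
    (hq : q = p + p ^ 2 / N) (hγ : γ = N * (q - p) / (p * q)) (hps : pstar = N * p / (N - p))
    (hQ : 0 ≤ Q) (hP : 0 < P)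
    (hmu : μ * a ^ (p ^ 2 / N) < q / (p * C ^ q))
    (heq : G = μ * γ * Q + P)
    (hGN : Q ≤ C ^ q * G ^ (q * γ / p) * a ^ (q * (1 - γ)))
    (hsob : P ≤ S ^ (-(pstar / p)) * G ^ (pstar / p)) :
    ((1 - (p / q) * C ^ q * μ * a ^ (p ^ 2 / N)) * S ^ (pstar / p)) ^ (p / (pstar - p)) ≤ G ∧
    0 < ((1 - (p / q) * C ^ q * μ * a ^ (p ^ 2 / N)) * S ^ (pstar / p)) ^ (p / (pstar - p)) ∧
    (1 / N) * (1 - (p / q) * C ^ q * μ * a ^ (p ^ 2 / N)) * G ≤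
      (1 / N) * G - (p * μ / (N * q)) * Q ∧
    0 < (1 / N) * G - (p * μ / (N * q)) * Q := by
  have hp0 : 0 < p := by linarith
  have hN : 0 < N := by linarith
  have hq0 : 0 < q := by rw [hq]; positivity
  rw [gamma_eq_div hp0 hN hq] at hγ
  subst hγ
  set θ := p / q * C ^ q * μ * a ^ (p ^ 2 / N)
  have hθ : θ < 1 := by
    rw [lt_div_iff₀ (by positivity)] at hmu
    calc θ = μ * a ^ (p ^ 2 / N) * (p * C ^ q) / q := by ring
      _ < 1 := (div_lt_one hq0).mpr hmu
  have hθ' : 0 < 1 - θ := sub_pos.mpr hθ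
  have hsub := mul_le_of_gagliardoNirenberg hp0 hN hq hμ.le hGN
  have hG : 0 < G := by rw [heq]; positivity
  have hpohozaev : (1 - θ) * G ≤ P := by linarith
  have hbound := rpow_inv_le_of_mul_le_rpow hθ' hS hG
    (hps ▸ sobolev_ratio_gt_one hp0 hpN) (hpohozaev.trans hsob)
  have henergy : 1 / N * (1 - θ) * G ≤ 1 / N * G - p * μ / (N * q) * Q := by
    calc 1 / N * (1 - θ) * G = 1 / N * G - 1 / N * (θ * G) := by ring
      _ ≤ 1 / N * G - 1 / N * (μ * (p / q) * Q) := by gcongr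
      _ = 1 / N * G - p * μ / (N * q) * Q := by field_simp
  rw [div_sub_self_eq_inv hp0.ne']
  exact ⟨hbound, by positivity, henergy, lt_of_lt_of_le (by positivity) henergy⟩

/-- Lower bounds on the gradient norm and the energy on the Pohozaev manifold in the
`L^p`-critical case `q = p + p²/N`, under `μ a^{p²/N} < q/(pC^q)`, the Gagliardo–Nirenberg
inequality and the Sobolev inequality. -/
theorem stmt_15 (N p a μ C S G Q P q γ pstar : ℝ)
    (hp : 1 < p) (hpN : p < N) (ha : 0 < a) (hμ : 0 < μ) (hC : 0 < C) (hS : 0 < S)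
    (hq : q = p + p ^ 2 / N) (hγ : γ = N * (q - p) / (p * q)) (hps : pstar = N * p / (N - p))
    (hQ : 0 ≤ Q) (hP : 0 < P)
    (hmu : μ * a ^ (p ^ 2 / N) < q / (p * C ^ q))
    (heq : G = μ * γ * Q + P)
    (hGN : Q ≤ C ^ q * G ^ (q * γ / p) * a ^ (q * (1 - γ)))
    (hsob : P ≤ S ^ (-(pstar / p)) * G ^ (pstar / p)) :
    ((1 - (p / q) * C ^ q * μ * a ^ (p ^ 2 / N)) * S ^ (pstar / p)) ^ (p / (pstar - p)) ≤ G ∧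
    0 < ((1 - (p / q) * C ^ q * μ * a ^ (p ^ 2 / N)) * S ^ (pstar / p)) ^ (p / (pstar - p)) ∧
    (1 / N) * (1 - (p / q) * C ^ q * μ * a ^ (p ^ 2 / N)) * G ≤
      (1 / N) * G - (p * μ / (N * q)) * Q ∧
    0 < (1 / N) * G - (p * μ / (N * q)) * Q :=
  stmt_15_general N p a μ C S G Q P q γ pstar hp hpN hμ hC hS hq hγ hps hQ hP hmu heq hGN hsob
end

section
/- Let ψ₀ be a minimizer of the Gagliardo–Nirenberg inequality and q = p + p²/N, ᾱ = 1/(p a^{p²/N} C^q). For μ < ᾱ, define t_μ by e^{(p^*−p)t_μ} = (1 − μ/ᾱ) ‖∇ψ₀‖_p^p ‖ψ₀‖_p^{p^*−p}·a^{p−p^*}/‖ψ₀‖_{p^*}^{p^*} (appropriately normalized so that t_μ ⋆ (a ψ₀/‖ψ₀‖_p) lies on the Pohozaev manifold). Then the energy satisfies E_μ(t_μ ⋆ φ) = (1/N)(1 − μ/ᾱ)^{N/p} ‖∇ψ₀‖_p^N / ‖ψ₀‖_{p^*}^N, hence m⁻(a,μ) ≤ C(ᾱ − μ)^{N/p}.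 -/
/-!
Since `q γ_q = p`, the `L^q` term scales exactly like the gradient term, and the
Gagliardo–Nirenberg equality turns it into `(μ/ᾱ)` times the gradient term: the energy along the
fiber is `(1/p) e^{pt} (1 - μ/ᾱ) G - (1/p*) e^{p* t} P`. On the Pohozaev manifold the two terms
balance, leaving `(1/p - 1/p*) e^{pt} (1 - μ/ᾱ) G = (1/N) e^{pt} (1 - μ/ᾱ) G`, and solving the
Pohozaev equation for `e^{pt}` gives the power `N/p`.
-/

open Real

section Exponents

variable {N p : ℝ}

theorem mul_gamma_eq_of_mass_critical {q γ : ℝ} (hp : 0 < p) (hN : 0 < N)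
    (hq : q = p + p ^ 2 / N) (hγ : γ = N * (q - p) / (p * q)) : q * γ = p := by
  have hq0 : p + p ^ 2 / N ≠ 0 := by positivity
  subst hq hγ
  field_simp
  ring

variable {pstar : ℝ} (hp : 0 < p) (hpN : p < N) (hps : pstar = N * p / (N - p))
include hp hpN hps

theorem one_div_sub_one_div_sobolev_conj : 1 / p - 1 / pstar = 1 / N := by
  have : N - p ≠ 0 := (sub_pos.mpr hpN).ne'
  have : N ≠ 0 := (hp.trans hpN).ne'
  have : p ≠ 0 := hp.ne'
  rw [hps]; field_simp; ring

theorem lt_sobolev_conj : p < pstar := by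
  rw [hps, lt_div_iff₀ (sub_pos.mpr hpN)]
  nlinarith

theorem div_sobolev_conj_sub : p / (pstar - p) = (N - p) / p := by
  have : N - p ≠ 0 := (sub_pos.mpr hpN).ne'
  have : N ≠ 0 := (hp.trans hpN).ne'
  have : p ≠ 0 := hp.ne'
  rw [hps, show N * p / (N - p) - p = p ^ 2 / (N - p) by field_simp; ring]
  field_simp

end Exponents

theorem exp_mul_eq_rpow_of_exp_mul_eq {r s t y : ℝ} (hs : s ≠ 0) (h : exp (s * t) = y) :
    exp (r * t) = y ^ (r / s) := by
  rw [← h, ← exp_mul]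
  congr 1
  field_simp

theorem div_rpow_mul_self {x y : ℝ} (hx : 0 < x) (hy : 0 ≤ y) (r : ℝ) :
    (x / y) ^ r * x = x ^ (r + 1) / y ^ r := by
  rw [div_rpow hx.le hy, rpow_add_one hx.ne']
  ring

theorem one_sub_div_rpow {α μ : ℝ} (hα : 0 < α) (hμ : μ ≤ α) (r : ℝ) :
    (1 - μ / α) ^ r = α ^ (-r) * (α - μ) ^ r := by
  rw [one_sub_div hα.ne', div_rpow (sub_nonneg.mpr hμ) hα.le, rpow_neg hα.le]
  ring

theorem fiber_energy_eq_of_pohozaev {N p pstar t K P : ℝ} (hP : P ≠ 0)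
    (hconj : 1 / p - 1 / pstar = 1 / N) (hpoh : exp ((pstar - p) * t) = K / P) :
    1 / p * exp (p * t) * K - 1 / pstar * exp (pstar * t) * P = 1 / N * exp (p * t) * K := by
  have hsplit : exp (pstar * t) * P = exp (p * t) * K := by
    rw [show pstar * t = p * t + (pstar - p) * t by ring, exp_add, hpoh]
    field_simp
  rw [mul_assoc (1 / pstar), hsplit, ← hconj]
  ring

theorem stmt_17_general (N p μ G Q P t q γ pstar αbar : ℝ)
    (hp : 1 < p) (hpN : p < N)
    (hq : q = p + p ^ 2 / N) (hγ : γ = N * (q - p) / (p * q)) (hps : pstar = N * p / (N - p))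
    (hμ : 0 < μ) (hμ2 : μ < αbar)
    (hG : 0 < G) (hP : 0 < P)
    (hGN : μ * γ * Q = (μ / αbar) * G)
    (ht : Real.exp ((pstar - p) * t) = (1 - μ / αbar) * G / P) :
    (1 / p) * Real.exp (p * t) * G - (μ / q) * Real.exp (q * γ * t) * Q -
        (1 / pstar) * Real.exp (pstar * t) * P =
      (1 / N) * (1 - μ / αbar) ^ (N / p) * G ^ (N / p) / P ^ ((N - p) / p) ∧
    (1 / p) * Real.exp (p * t) * G - (μ / q) * Real.exp (q * γ * t) * Q -
        (1 / pstar) * Real.exp (pstar * t) * P ≤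
      ((1 / N) * αbar ^ (-(N / p)) * G ^ (N / p) / P ^ ((N - p) / p)) * (αbar - μ) ^ (N / p) := by
  have hp0 : 0 < p := one_pos.trans hp
  have hN : 0 < N := hp0.trans hpN
  have hα : 0 < αbar := hμ.trans hμ2
  have hc : 0 < 1 - μ / αbar := sub_pos.mpr ((div_lt_one hα).mpr hμ2)
  have hqγ : q * γ = p := mul_gamma_eq_of_mass_critical hp0 hN hq hγ
  have hLq : μ / q * exp (q * γ * t) * Q = 1 / p * exp (p * t) * ((μ / αbar) * G) := by
    have hq0 : q ≠ 0 := by rw [hq]; positivity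
    rw [hqγ, ← hGN, eq_div_of_mul_eq hq0 ((mul_comm γ q).trans hqγ)]
    field_simp
  have hexp : exp (p * t) = ((1 - μ / αbar) * G / P) ^ ((N - p) / p) := by
    rw [exp_mul_eq_rpow_of_exp_mul_eq (sub_pos.mpr (lt_sobolev_conj hp0 hpN hps)).ne' ht,
      div_sobolev_conj_sub hp0 hpN hps]
  have hE : 1 / p * exp (p * t) * G - μ / q * exp (q * γ * t) * Q -
      1 / pstar * exp (pstar * t) * P =
      1 / N * (1 - μ / αbar) ^ (N / p) * G ^ (N / p) / P ^ ((N - p) / p) :=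
    calc _ = 1 / p * exp (p * t) * ((1 - μ / αbar) * G) - 1 / pstar * exp (pstar * t) * P := by
          rw [hLq]; ring
      _ = 1 / N * (exp (p * t) * ((1 - μ / αbar) * G)) := by
          rw [fiber_energy_eq_of_pohozaev hP.ne' (one_div_sub_one_div_sobolev_conj hp0 hpN hps) ht]
          ring
      _ = _ := by
          rw [hexp, div_rpow_mul_self (by positivity) hP.le,
            show (N - p) / p + 1 = N / p by field_simp; ring, mul_rpow hc.le hG.le]
          ring
  refine ⟨hE, hE.le.trans_eq ?_⟩
  rw [one_sub_div_rpow hα hμ2.le]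
  ring

/-- Energy of the test function `t_μ ⋆ φ` (with `φ = aψ₀/‖ψ₀‖_p`, `ψ₀` a Gagliardo–Nirenberg
minimizer) in the critical case `q = p + p²/N`: with `ᾱ = 1/(p a^{p²/N} C^q)`, `μ < ᾱ`,
`G = ‖∇φ‖_p^p`, `Q = ‖φ‖_q^q`, `P = ‖φ‖_{p*}^{p*}` satisfying the GN equality
`μγ_q Q = (μ/ᾱ)G` and `t` determined by `e^{(p*-p)t} = (1-μ/ᾱ)G/P`, the energy equals
`(1/N)(1-μ/ᾱ)^{N/p} G^{N/p}/P^{(N-p)/p}`, hence is bounded by a constant times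
`(ᾱ-μ)^{N/p}`. -/
theorem stmt_17 (N p a μ C G Q P t q γ pstar αbar : ℝ)
    (hp : 1 < p) (hpN : p < N) (ha : 0 < a) (hC : 0 < C)
    (hq : q = p + p ^ 2 / N) (hγ : γ = N * (q - p) / (p * q)) (hps : pstar = N * p / (N - p))
    (hαbar : αbar = 1 / (p * a ^ (p ^ 2 / N) * C ^ q))
    (hμ : 0 < μ) (hμ2 : μ < αbar)
    (hG : 0 < G) (hQ : 0 < Q) (hP : 0 < P)
    (hGN : μ * γ * Q = (μ / αbar) * G)
    (ht : Real.exp ((pstar - p) * t) = (1 - μ / αbar) * G / P) :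
    (1 / p) * Real.exp (p * t) * G - (μ / q) * Real.exp (q * γ * t) * Q -
        (1 / pstar) * Real.exp (pstar * t) * P =
      (1 / N) * (1 - μ / αbar) ^ (N / p) * G ^ (N / p) / P ^ ((N - p) / p) ∧
    (1 / p) * Real.exp (p * t) * G - (μ / q) * Real.exp (q * γ * t) * Q -
        (1 / pstar) * Real.exp (pstar * t) * P ≤
      ((1 / N) * αbar ^ (-(N / p)) * G ^ (N / p) / P ^ ((N - p) / p)) * (αbar - μ) ^ (N / p) :=
  stmt_17_general N p μ G Q P t q γ pstar αbar hp hpN hq hγ hps hμ hμ2 hG hP hGN ht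
end
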